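/- Let m ≥ 1 and set N = 2m, with coordinates (Z¹,…,Z^m,θ¹,…,θ^m) on ℂ^N; let e_i and v_i denote the constant coordinate vector fields ∂/∂Zⁱ and ∂/∂θⁱ. Let q ∈ ℂ^N, 0 < r < R, and let (ġ_k)_{k≥1} be holomorphic vector fields on an open neighborhood of the closed polydisc B_R(q) ⊆ ℂ^N. Fix an integer l ≥ 1 and suppose that for every i = 1,…,m the gauge recursion holds: Σ_{r'=1}^{l+1} (1/r'!) Σ_{k₁+⋯+k_{r'} = l+1, k_j ≥ 1} [ġ_{k₁},[…,[ġ_{k_{r'}}, v_i]…]] + Σ_{r'=1}^{l} (1/r'!) Σ_{k₁+⋯+k_{r'} = l, k_j ≥ 1} [ġ_{k₁},[…,[ġ_{k_{r'}}, e_i]…]] = 0. Then for every i = 1,…,m: ‖[v_i, ġ_{l+1}]‖_{B_r(q)} ≤ Σ_{s=2}^{l+1} (1/s!) (2Ns/(R−r))^s Σ_{k₁+⋯+k_s = l+1, k_j ≥ 1} Π_{j=1}^{s} ‖ġ_{k_j}‖_{B_R(q)} + Σ_{s=1}^{l} (1/s!) (2Ns/(R−r))^s Σ_{k₁+⋯+k_s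 = l, k_j ≥ 1} Π_{j=1}^{s} ‖ġ_{k_j}‖_{B_R(q)}. -/

import Mathlib

/-- Points of `ℂ^N = ℂ^{2m} = ℂ^m × ℂ^m` with coordinates `(Z, θ)`. -/
abbrev JVec (m : ℕ) := (Fin m → ℂ) × (Fin m → ℂ)

/-- Vector fields on (an open subset of) `ℂ^{2m}`. -/
abbrev JVF (m : ℕ) := JVec m → JVec m

/-- The Lie bracket `[V,W](z) = DW(z)(V(z)) − DV(z)(W(z))`. -/
noncomputable def lieB {m : ℕ} (V W : JVF m) : JVF m :=
  fun z => fderiv ℂ W z (V z) - fderiv ℂ V z (W z)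

/-- The constant coordinate vector field `e_i = ∂/∂Zⁱ`. -/
def eVF {m : ℕ} (i : Fin m) : JVF m := fun _ => (Pi.single i 1, 0)

/-- The constant coordinate vector field `v_i = ∂/∂θⁱ`. -/
def vVF {m : ℕ} (i : Fin m) : JVF m := fun _ => (0, Pi.single i 1)

/-- Nested Lie bracket `[L₁,[L₂,…,[L_m, X]…]]`. -/
noncomputable def nestedBracket {m : ℕ} (L : List (JVF m)) (X : JVF m) : JVF m :=
  L.foldr lieB X

/-- Compositions: tuples `(k₁,…,k_r)` of positive integers with `k₁+⋯+k_r = s`. -/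
def comps (r s : ℕ) : Finset (Fin r → ℕ) :=
  (Finset.Nat.antidiagonalTuple r s).filter fun t => ∀ j, 1 ≤ t j

/-- The left-hand side of the gauge recursion at order `l` in direction `i`. -/
noncomputable def gaugeRecLHS {m : ℕ} (g : ℕ → JVF m) (l : ℕ) (i : Fin m) : JVF m :=
  (∑ r ∈ Finset.Icc 1 (l + 1), ((r.factorial : ℂ)⁻¹) •
      ∑ t ∈ comps r (l + 1), nestedBracket (List.ofFn fun j => g (t j)) (vVF i))
  + (∑ r ∈ Finset.Icc 1 l, ((r.factorial : ℂ)⁻¹) •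
      ∑ t ∈ comps r l, nestedBracket (List.ofFn fun j => g (t j)) (eVF i))

/-- The closed polydisc of polyradius `r` centered at `q` in `ℂ^{2m}`. -/
def polyDisc {m : ℕ} (q : JVec m) (r : ℝ) : Set (JVec m) :=
  {w | (∀ j, ‖w.1 j - q.1 j‖ ≤ r) ∧ (∀ j, ‖w.2 j - q.2 j‖ ≤ r)}

/-- `‖V‖_K`, the sup over `K` of the max of the absolute values of the components. -/
noncomputable def vfNorm {m : ℕ} (V : JVF m) (K : Set (JVec m)) : ℝ :=
  ⨆ w ∈ K, ‖V w‖

/-!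
Solving the gauge recursion for its `r' = 1` term, `[ġ_{l+1}, v_i] = -[v_i, ġ_{l+1}]`, expresses
`[v_i, ġ_{l+1}]` through the remaining nested brackets `[ġ_{k₁},[…,[ġ_{k_s}, X]…]]` with
`X = v_i` or `e_i`, so it suffices to bound those. Polydiscs are balls for the sup norm, and the
Schwarz lemma gives the Cauchy estimate `‖Df(z)‖ ≤ 2 sup_{B(z,d)} ‖f‖ / d`; hence one bracket
costs a factor `4 / d` when the ball shrinks by `d`. Shrinking by `d = (R - r)/s` for each of the
`s` brackets gives `(4s/(R - r))^s ≤ (2Ns/(R - r))^s`.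

Brackets of holomorphic fields are again holomorphic because the derivative of a holomorphic map
between finite-dimensional spaces is holomorphic: a directional derivative is a Cauchy integral
over a circle in a complex line, which can be differentiated under the integral sign.
-/

open Metric Set Complex MeasureTheory Real

theorem differentiableAt_clm_of_forall_apply {𝕜 D E F : Type*} [NontriviallyNormedField 𝕜]
    [CompleteSpace 𝕜] [NormedAddCommGroup D] [NormedSpace 𝕜 D] [NormedAddCommGroup E]
    [NormedSpace 𝕜 E] [FiniteDimensional 𝕜 E] [NormedAddCommGroup F] [NormedSpace 𝕜 F]
    {f : D → E →L[𝕜] F} {x : D} (h : ∀ y, DifferentiableAt 𝕜 (fun x => f x y) x) :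
    DifferentiableAt 𝕜 f x := by
  let d := Module.finrank 𝕜 E
  let e₁ : E ≃L[𝕜] (Fin d → 𝕜) :=
    ContinuousLinearEquiv.ofFinrankEq (Module.finrank_fin_fun 𝕜).symm
  let e₂ : (E →L[𝕜] F) ≃L[𝕜] (Fin d → F) :=
    (e₁.arrowCongr (1 : F ≃L[𝕜] F)).trans (ContinuousLinearEquiv.piRing (Fin d))
  rw [← Function.id_comp f, ← e₂.symm_comp_self]
  exact e₂.symm.differentiableAt.comp x (differentiableAt_pi.mpr fun i => h _)

section Holomorphic

variable {E F : Type*} [NormedAddCommGroup E] [NormedSpace ℂ E]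
  [NormedAddCommGroup F] [NormedSpace ℂ F]

theorem norm_fderiv_le_of_forall_norm_le {f : E → F} {c : E} {d M : ℝ} (hd : 0 < d)
    (hf : DifferentiableOn ℂ f (ball c d)) (hM : ∀ w ∈ ball c d, ‖f w‖ ≤ M) :
    ‖fderiv ℂ f c‖ ≤ 2 * M / d := by
  refine norm_fderiv_le_div_of_mapsTo_ball hf (fun w hw => ?_) hd
  rw [mem_closedBall, dist_eq_norm]
  linarith [norm_sub_le (f w) (f c), hM w hw, hM c (mem_ball_self hd)]

theorem fderiv_apply_eq_cderiv [CompleteSpace F] {f : E → F} {Ω : Set E} (hΩ : IsOpen Ω)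
    (hf : DifferentiableOn ℂ f Ω) {z u : E} {ρ : ℝ} (hρ : 0 < ρ)
    (hline : ∀ t : ℂ, ‖t‖ ≤ ρ → z + t • u ∈ Ω) :
    fderiv ℂ f z u = cderiv ρ (fun t => f (z + t • u)) 0 := by
  have hU : IsOpen {t : ℂ | z + t • u ∈ Ω} :=
    hΩ.preimage (continuous_const.add (continuous_id.smul continuous_const))
  have hφ : DifferentiableOn ℂ (fun t : ℂ => f (z + t • u)) {t | z + t • u ∈ Ω} :=
    hf.comp ((differentiable_const _).add (differentiable_id.smul_const u)).differentiableOn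
      fun t ht => ht
  rw [cderiv_eq_deriv hU hφ hρ fun t ht => hline t (by simpa using ht)]
  have hz : z ∈ Ω := by simpa using hline 0 (by simpa using hρ.le)
  have hline' : HasDerivAt (fun t : ℂ => z + t • u) u 0 := by
    simpa using ((hasDerivAt_id (0 : ℂ)).smul_const u).const_add z
  have := (hf.differentiableAt (hΩ.mem_nhds hz)).hasFDerivAt.comp_hasDerivAt_of_eq 0 hline'
    (by simp)
  exact this.deriv.symm

theorem DifferentiableOn.exists_ball_subset_forall_norm_le {f : E → F} {Ω : Set E}
    (hΩ : IsOpen Ω) (hf : DifferentiableOn ℂ f Ω) {z₀ : E} (hz₀ : z₀ ∈ Ω) :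
    ∃ ε > 0, ∃ M, ball z₀ ε ⊆ Ω ∧ ∀ w ∈ ball z₀ ε, ‖f w‖ ≤ M := by
  have hbdd : ∀ᶠ w in nhds z₀, w ∈ Ω ∧ ‖f w‖ < ‖f z₀‖ + 1 :=
    Filter.Eventually.and (hΩ.mem_nhds hz₀) <|
      (hf.differentiableAt (hΩ.mem_nhds hz₀)).continuousAt.norm.eventually
        (gt_mem_nhds (lt_add_one _))
  obtain ⟨ε, hε, hball⟩ := Metric.eventually_nhds_iff_ball.mp hbdd
  exact ⟨ε, hε, _, fun w hw => (hball w hw).1, fun w hw => (hball w hw).2.le⟩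

theorem differentiableAt_cderiv_comp_line [FiniteDimensional ℂ E] [FiniteDimensional ℂ F]
    {f : E → F} {Ω : Set E} (hΩ : IsOpen Ω) (hf : DifferentiableOn ℂ f Ω) {z₀ u : E}
    {δ ρ K : ℝ} (hδ : 0 < δ) (hρ : 0 < ρ)
    (hmem : ∀ z ∈ ball z₀ δ, ∀ t : ℂ, ‖t‖ ≤ ρ → z + t • u ∈ Ω)
    (hK : ∀ z ∈ ball z₀ δ, ∀ t : ℂ, ‖t‖ ≤ ρ → ‖fderiv ℂ f (z + t • u)‖ ≤ K) :
    DifferentiableAt ℂ (fun z => cderiv ρ (fun t => f (z + t • u)) 0) z₀ := by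
  borelize E
  set c : ℝ → ℂ := circleMap 0 ρ
  have hc : ∀ θ, ‖c θ‖ = ρ := fun θ => by simp [c, hρ.le]
  have hc_cont : Continuous c := continuous_circleMap 0 ρ
  have hc_ne : ∀ θ, c θ ^ 2 ≠ 0 := fun θ =>
    pow_ne_zero 2 (by rw [← norm_ne_zero_iff, hc θ]; exact hρ.ne')
  have hdc : deriv c = fun θ => c θ * I := funext (deriv_circleMap 0 ρ)
  set Φ : E → ℝ → F := fun z θ => deriv c θ • ((c θ ^ 2)⁻¹ • f (z + c θ • u))
  set Φ' : E → ℝ → E →L[ℂ] F := fun z θ =>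
    deriv c θ • ((c θ ^ 2)⁻¹ • fderiv ℂ f (z + c θ • u))
  have hΦ_cont : ∀ z ∈ ball z₀ δ, Continuous (Φ z) := by
    intro z hz
    have hf_line : Continuous fun θ => f (z + c θ • u) :=
      continuous_iff_continuousAt.2 fun θ =>
        ContinuousAt.comp (f := fun θ : ℝ => z + c θ • u)
          (hf.differentiableAt (hΩ.mem_nhds (hmem z hz _ (hc θ).le))).continuousAt (by fun_prop)
    simp only [Φ, hdc]
    exact (hc_cont.mul continuous_const).smul (((hc_cont.pow 2).inv₀ hc_ne).smul hf_line)
  have hderiv : HasFDerivAt (fun z => ∫ θ in Ioc 0 (2 * π), Φ z θ)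
      (∫ θ in Ioc 0 (2 * π), Φ' z₀ θ) z₀ := by
    refine hasFDerivAt_integral_of_dominated_of_fderiv_le (𝕜 := ℂ) (ball_mem_nhds z₀ hδ)
      (bound := fun _ => ρ * (ρ ^ 2)⁻¹ * K) ?_ ?_ ?_ ?_ ?_ ?_
    · filter_upwards [ball_mem_nhds z₀ hδ] with z hz
      exact (hΦ_cont z hz).aestronglyMeasurable
    · exact (hΦ_cont z₀ (mem_ball_self hδ)).integrableOn_Ioc
    · simp only [Φ', hdc]
      refine (((hc_cont.mul continuous_const).aestronglyMeasurable).smul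
        ((((hc_cont.pow 2).inv₀ hc_ne).aestronglyMeasurable).smul ?_))
      exact ((measurable_fderiv ℂ f).comp (by fun_prop : Continuous
        fun θ => z₀ + c θ • u).measurable).aestronglyMeasurable
    · refine Filter.Eventually.of_forall fun θ z hz => ?_
      have hnorm : ‖deriv c θ‖ = ρ := by rw [hdc]; simp [hc θ]
      calc ‖Φ' z θ‖ ≤ ‖deriv c θ‖ * (‖(c θ ^ 2)⁻¹‖ * ‖fderiv ℂ f (z + c θ • u)‖) :=
            (ContinuousLinearMap.opNorm_smul_le _ _).trans
              (mul_le_mul_of_nonneg_left (ContinuousLinearMap.opNorm_smul_le _ _) (norm_nonneg _))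
        _ ≤ ρ * (ρ ^ 2)⁻¹ * K := by
          rw [hnorm, norm_inv, norm_pow, hc θ, mul_assoc]
          gcongr; exact hK z hz _ (hc θ).le
    · exact integrable_const _
    · refine Filter.Eventually.of_forall fun θ z hz => ?_
      have hfz : HasFDerivAt f (fderiv ℂ f (z + c θ • u)) (z + c θ • u) :=
        (hf.differentiableAt (hΩ.mem_nhds (hmem z hz _ (hc θ).le))).hasFDerivAt
      have htr : HasFDerivAt (fun y : E => y + c θ • u) (ContinuousLinearMap.id ℂ E) z :=
        (hasFDerivAt_id z).add_const _
      have := ((hfz.comp z htr).const_smul (c θ ^ 2)⁻¹).const_smul (deriv c θ)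
      rwa [ContinuousLinearMap.comp_id] at this
  simp only [cderiv, circleIntegral, intervalIntegral.integral_of_le two_pi_pos.le, sub_zero]
  exact hderiv.differentiableAt.const_smul _

theorem DifferentiableOn.differentiableAt_fderiv_apply [FiniteDimensional ℂ E]
    [FiniteDimensional ℂ F] {f : E → F} {Ω : Set E} (hΩ : IsOpen Ω)
    (hf : DifferentiableOn ℂ f Ω) {z₀ : E} (hz₀ : z₀ ∈ Ω) (u : E) :
    DifferentiableAt ℂ (fun z => fderiv ℂ f z u) z₀ := by
  obtain ⟨ε, hε, M, hεΩ, hM⟩ := hf.exists_ball_subset_forall_norm_le hΩ hz₀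
  set ρ : ℝ := ε / (4 * (‖u‖ + 1)) with hρ_def
  have hρ : 0 < ρ := by positivity
  have hline : ∀ z ∈ ball z₀ (ε / 4), ∀ t : ℂ, ‖t‖ ≤ ρ → z + t • u ∈ ball z₀ (ε / 2) := by
    intro z hz t ht
    have htu : ‖t • u‖ ≤ ε / 4 := by
      rw [norm_smul]
      calc ‖t‖ * ‖u‖ ≤ ρ * (‖u‖ + 1) := by gcongr; linarith
        _ = ε / 4 := by rw [hρ_def]; field_simp
    rw [mem_ball, dist_eq_norm] at hz ⊢
    calc ‖z + t • u - z₀‖ = ‖(z - z₀) + t • u‖ := by congr 1; abel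
      _ ≤ ‖z - z₀‖ + ‖t • u‖ := norm_add_le _ _
      _ < ε / 2 := by linarith
  have hmem : ∀ z ∈ ball z₀ (ε / 4), ∀ t : ℂ, ‖t‖ ≤ ρ → z + t • u ∈ Ω := fun z hz t ht =>
    hεΩ (ball_subset_ball (by linarith) (hline z hz t ht))
  have hK : ∀ w ∈ ball z₀ (ε / 2), ‖fderiv ℂ f w‖ ≤ 2 * M / (ε / 2) := by
    intro w hw
    have hsub : ball w (ε / 2) ⊆ ball z₀ ε := by
      refine ball_subset_ball' ?_
      rw [mem_ball] at hw
      linarith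
    exact norm_fderiv_le_of_forall_norm_le (by positivity) (hf.mono (hsub.trans hεΩ))
      fun v hv => hM v (hsub hv)
  refine (differentiableAt_cderiv_comp_line hΩ hf (by positivity) hρ hmem
    fun z hz t ht => hK _ (hline z hz t ht)).congr_of_eventuallyEq ?_
  filter_upwards [ball_mem_nhds z₀ (by positivity : 0 < ε / 4)] with z hz
  exact fderiv_apply_eq_cderiv hΩ hf hρ (hmem z hz)

theorem DifferentiableOn.differentiableOn_fderiv [FiniteDimensional ℂ E] [FiniteDimensional ℂ F]
    {f : E → F} {Ω : Set E} (hΩ : IsOpen Ω) (hf : DifferentiableOn ℂ f Ω) :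
    DifferentiableOn ℂ (fderiv ℂ f) Ω := fun _ hz =>
  (differentiableAt_clm_of_forall_apply fun u =>
    hf.differentiableAt_fderiv_apply hΩ hz u).differentiableWithinAt

end Holomorphic

section VectorFields

variable {m : ℕ}

theorem polyDisc_eq_closedBall [Nonempty (Fin m)] (q : JVec m) (ρ : ℝ) :
    polyDisc q ρ = closedBall q ρ := by
  ext w
  simp only [polyDisc, mem_ofPred_eq, mem_closedBall, dist_eq_norm, norm_prod_le_iff,
    pi_norm_le_iff_of_nonempty, Prod.fst_sub, Prod.snd_sub, Pi.sub_apply]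

theorem vfNorm_nonneg (V : JVF m) (K : Set (JVec m)) : 0 ≤ vfNorm V K :=
  Real.iSup_nonneg fun _ => Real.iSup_nonneg fun _ => norm_nonneg _

theorem vfNorm_le {V : JVF m} {K : Set (JVec m)} {M : ℝ} (h : ∀ w ∈ K, ‖V w‖ ≤ M)
    (hM : 0 ≤ M) : vfNorm V K ≤ M :=
  Real.iSup_le (fun w => Real.iSup_le (h w) hM) hM

theorem norm_le_vfNorm {V : JVF m} {K : Set (JVec m)} (hK : IsCompact K)
    (hV : ContinuousOn V K) {w : JVec m} (hw : w ∈ K) : ‖V w‖ ≤ vfNorm V K := by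
  obtain ⟨C, hC⟩ := hK.exists_bound_of_continuousOn hV
  have hbdd : BddAbove (range fun w => ⨆ _ : w ∈ K, ‖V w‖) :=
    ⟨max C 0, forall_mem_range.2 fun w =>
      Real.iSup_le (fun hw => (hC w hw).trans (le_max_left _ _)) (le_max_right _ _)⟩
  exact le_ciSup_of_le hbdd w (ciSup_pos (f := fun _ => ‖V w‖) hw).ge

theorem lieB_swap (V W : JVF m) : lieB W V = -lieB V W := by
  ext1 z
  simp [lieB]

theorem lieB_differentiableOn {Ω : Set (JVec m)} (hΩ : IsOpen Ω) {V W : JVF m}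
    (hV : DifferentiableOn ℂ V Ω) (hW : DifferentiableOn ℂ W Ω) :
    DifferentiableOn ℂ (lieB V W) Ω :=
  ((hW.differentiableOn_fderiv hΩ).clm_apply hV).sub
    ((hV.differentiableOn_fderiv hΩ).clm_apply hW)

theorem nestedBracket_cons (V : JVF m) (L : List (JVF m)) (X : JVF m) :
    nestedBracket (V :: L) X = lieB V (nestedBracket L X) := rfl

theorem nestedBracket_differentiableOn {Ω : Set (JVec m)} (hΩ : IsOpen Ω) {X : JVF m}
    (hX : DifferentiableOn ℂ X Ω) :
    ∀ L : List (JVF m), (∀ V ∈ L, DifferentiableOn ℂ V Ω) →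
      DifferentiableOn ℂ (nestedBracket L X) Ω
  | [], _ => hX
  | V :: L, hL => by
    rw [List.forall_mem_cons] at hL
    exact lieB_differentiableOn hΩ hL.1 (nestedBracket_differentiableOn hΩ hX L hL.2)

theorem norm_lieB_le {V W : JVF m} {z : JVec m} {d A B : ℝ} (hd : 0 < d)
    (hV : DifferentiableOn ℂ V (ball z d)) (hW : DifferentiableOn ℂ W (ball z d))
    (hA : ∀ w ∈ ball z d, ‖V w‖ ≤ A) (hB : ∀ w ∈ ball z d, ‖W w‖ ≤ B) :
    ‖lieB V W z‖ ≤ 4 * A * B / d := by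
  have hz : z ∈ ball z d := mem_ball_self hd
  have hA0 : 0 ≤ A := (norm_nonneg _).trans (hA z hz)
  have hB0 : 0 ≤ B := (norm_nonneg _).trans (hB z hz)
  have hDW := norm_fderiv_le_of_forall_norm_le hd hW hB
  have hDV := norm_fderiv_le_of_forall_norm_le hd hV hA
  calc ‖lieB V W z‖ ≤ ‖fderiv ℂ W z‖ * ‖V z‖ + ‖fderiv ℂ V z‖ * ‖W z‖ :=
        (norm_sub_le _ _).trans (add_le_add ((fderiv ℂ W z).le_opNorm _)
          ((fderiv ℂ V z).le_opNorm _))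
    _ ≤ 2 * B / d * A + 2 * A / d * B :=
      add_le_add (mul_le_mul hDW (hA z hz) (norm_nonneg _) (by positivity))
        (mul_le_mul hDV (hB z hz) (norm_nonneg _) (by positivity))
    _ = 4 * A * B / d := by ring

theorem norm_nestedBracket_le {Ω : Set (JVec m)} (hΩ : IsOpen Ω) {q : JVec m} {R d : ℝ}
    (hd : 0 < d) (hsub : closedBall q R ⊆ Ω) {X : JVF m} (hX : DifferentiableOn ℂ X Ω)
    {C : ℝ} (hC : ∀ w ∈ closedBall q R, ‖X w‖ ≤ C) :
    ∀ {n : ℕ} (V : Fin n → JVF m) (M : Fin n → ℝ), (∀ j, DifferentiableOn ℂ (V j) Ω) →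
      (∀ j, ∀ w ∈ closedBall q R, ‖V j w‖ ≤ M j) →
      ∀ z ∈ closedBall q (R - n * d), ‖nestedBracket (List.ofFn V) X z‖ ≤
        (4 / d) ^ n * (∏ j, M j) * C
  | 0, _, _, _, _, z, hz => by simpa [nestedBracket] using hC z (by simpa using hz)
  | n + 1, V, M, hV, hM, z, hz => by
    have hball : ball z d ⊆ closedBall q (R - n * d) := by
      refine ball_subset_closedBall.trans (closedBall_subset_closedBall' ?_)
      rw [mem_closedBall] at hz
      push_cast at hz
      linarith
    have hR : closedBall q (R - n * d) ⊆ closedBall q R :=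
      closedBall_subset_closedBall (by nlinarith [hd.le, (n.cast_nonneg : (0 : ℝ) ≤ n)])
    have hW := nestedBracket_differentiableOn hΩ hX (List.ofFn fun j : Fin n => V j.succ)
      (List.forall_mem_ofFn_iff.2 fun j => hV j.succ)
    have hbound := norm_lieB_le hd ((hV 0).mono (hball.trans (hR.trans hsub)))
      (hW.mono (hball.trans (hR.trans hsub))) (fun w hw => hM 0 w (hR (hball hw)))
      (fun w hw => norm_nestedBracket_le hΩ hd hsub hX hC (fun j => V j.succ)
        (fun j => M j.succ) (fun j => hV _) (fun j => hM _) w (hball hw))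
    rw [List.ofFn_succ, nestedBracket_cons, Fin.prod_univ_succ]
    exact hbound.trans_eq (by ring)

theorem norm_nestedBracket_comps_le {Ω : Set (JVec m)} (hΩ : IsOpen Ω) {q : JVec m}
    {r R κ : ℝ} (hrR : r < R) (hκ : 4 ≤ κ) (hsub : closedBall q R ⊆ Ω) {g : ℕ → JVF m}
    (hg : ∀ k, 1 ≤ k → DifferentiableOn ℂ (g k) Ω) {X : JVF m}
    (hX : DifferentiableOn ℂ X Ω) (hX1 : ∀ w, ‖X w‖ ≤ 1) {s : ℕ} {t : Fin s → ℕ}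
    (ht : ∀ j, 1 ≤ t j) {z : JVec m} (hz : z ∈ closedBall q r) :
    ‖nestedBracket (List.ofFn fun j => g (t j)) X z‖ ≤
      (κ * s / (R - r)) ^ s * ∏ j, vfNorm (g (t j)) (closedBall q R) := by
  obtain rfl | hs := s.eq_zero_or_pos
  · simpa [nestedBracket] using hX1 z
  have hRr : 0 < R - r := sub_pos.2 hrR
  have hd : 0 < (R - r) / s := by positivity
  have hz' : z ∈ closedBall q (R - s * ((R - r) / s)) := by
    rwa [mul_div_cancel₀ _ (by positivity), sub_sub_cancel]
  have hnested := norm_nestedBracket_le hΩ hd hsub hX (C := 1) (fun w _ => hX1 w)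
    (fun j => g (t j)) (fun j => vfNorm (g (t j)) (closedBall q R)) (fun j => hg _ (ht j))
    (fun j w hw => norm_le_vfNorm (isCompact_closedBall q R)
      ((hg _ (ht j)).continuousOn.mono hsub) hw) z hz'
  refine hnested.trans ?_
  rw [mul_one, div_div_eq_mul_div]
  gcongr
  exact Finset.prod_nonneg fun j _ => vfNorm_nonneg _ _

theorem norm_sum_factorial_inv_smul_le {Ω : Set (JVec m)} (hΩ : IsOpen Ω) {q : JVec m}
    {r R κ : ℝ} (hrR : r < R) (hκ : 4 ≤ κ) (hsub : closedBall q R ⊆ Ω) {g : ℕ → JVF m}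
    (hg : ∀ k, 1 ≤ k → DifferentiableOn ℂ (g k) Ω) {X : JVF m}
    (hX : DifferentiableOn ℂ X Ω) (hX1 : ∀ w, ‖X w‖ ≤ 1) (S : Finset ℕ) (n : ℕ)
    {z : JVec m} (hz : z ∈ closedBall q r) :
    ‖∑ s ∈ S, ((s.factorial : ℂ)⁻¹) •
        ∑ t ∈ comps s n, nestedBracket (List.ofFn fun j => g (t j)) X z‖ ≤
      ∑ s ∈ S, (1 / (s.factorial : ℝ)) * (κ * s / (R - r)) ^ s *
        ∑ t ∈ comps s n, ∏ j, vfNorm (g (t j)) (closedBall q R) := by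
  refine (norm_sum_le _ _).trans (Finset.sum_le_sum fun s _ => ?_)
  rw [norm_smul, norm_inv, Complex.norm_natCast, mul_assoc, Finset.mul_sum, one_div]
  gcongr
  refine (norm_sum_le _ _).trans (Finset.sum_le_sum fun t ht => ?_)
  exact norm_nestedBracket_comps_le hΩ hrR hκ hsub hg hX hX1 (Finset.mem_filter.1 ht).2 hz

theorem comps_one {n : ℕ} (hn : 1 ≤ n) : comps 1 n = {fun _ => n} := by
  ext t
  simp only [comps, Finset.mem_filter, Finset.Nat.mem_antidiagonalTuple, Finset.mem_singleton,
    Fin.sum_univ_one, funext_iff, Fin.forall_fin_one]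
  exact ⟨And.left, fun h => ⟨h, h ▸ hn⟩⟩

theorem lieB_vVF_eq_of_gaugeRecLHS_eq_zero {g : ℕ → JVF m} {l : ℕ} {i : Fin m} {z : JVec m}
    (h : gaugeRecLHS g l i z = 0) :
    lieB (vVF i) (g (l + 1)) z =
      (∑ s ∈ Finset.Icc 2 (l + 1), ((s.factorial : ℂ)⁻¹) •
          ∑ t ∈ comps s (l + 1), nestedBracket (List.ofFn fun j => g (t j)) (vVF i) z)
        + ∑ s ∈ Finset.Icc 1 l, ((s.factorial : ℂ)⁻¹) •
          ∑ t ∈ comps s l, nestedBracket (List.ofFn fun j => g (t j)) (eVF i) z := by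
  simp only [gaugeRecLHS, Pi.add_apply, Finset.sum_apply, Pi.smul_apply] at h
  rw [← Finset.insert_Icc_add_one_left_eq_Icc (by omega : 1 ≤ l + 1), Finset.sum_insert (by simp),
    comps_one (by omega), Finset.sum_singleton] at h
  simp only [Nat.factorial_one, Nat.cast_one, inv_one, one_smul, List.ofFn_succ, List.ofFn_zero,
    nestedBracket_cons] at h
  rwa [nestedBracket, List.foldr_nil, lieB_swap, add_assoc, Pi.neg_apply, neg_add_eq_zero] at h

theorem norm_vVF (i : Fin m) (w : JVec m) : ‖vVF i w‖ = 1 := by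
  simp [vVF, Pi.norm_single]

theorem norm_eVF (i : Fin m) (w : JVec m) : ‖eVF i w‖ = 1 := by
  simp [eVF, Pi.norm_single]

end VectorFields

theorem stmt_4_general (m : ℕ) (q : JVec m) (r R : ℝ) (hrR : r < R)
    (Ω : Set (JVec m)) (hΩ : IsOpen Ω) (hsub : polyDisc q R ⊆ Ω)
    (g : ℕ → JVF m) (hg : ∀ k, 1 ≤ k → DifferentiableOn ℂ (g k) Ω)
    (l : ℕ)
    (hrec : ∀ i : Fin m, ∀ z ∈ Ω, gaugeRecLHS g l i z = 0) :
    ∀ i : Fin m,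
      vfNorm (lieB (vVF i) (g (l + 1))) (polyDisc q r)
        ≤ (∑ s ∈ Finset.Icc 2 (l + 1), (1 / (s.factorial : ℝ)) *
              ((2 * (2 * (m : ℝ)) * (s : ℝ)) / (R - r)) ^ s *
              ∑ t ∈ comps s (l + 1), ∏ j, vfNorm (g (t j)) (polyDisc q R))
          + (∑ s ∈ Finset.Icc 1 l, (1 / (s.factorial : ℝ)) *
              ((2 * (2 * (m : ℝ)) * (s : ℝ)) / (R - r)) ^ s *
              ∑ t ∈ comps s l, ∏ j, vfNorm (g (t j)) (polyDisc q R)) := by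
  intro i
  have : Nonempty (Fin m) := ⟨i⟩
  have hκ : (4 : ℝ) ≤ 2 * (2 * m) := by
    have : (1 : ℝ) ≤ m := by exact_mod_cast i.pos
    linarith
  simp only [polyDisc_eq_closedBall] at hsub ⊢
  have hbound_nonneg : ∀ (S : Finset ℕ) (n : ℕ), 0 ≤ ∑ s ∈ S, (1 / (s.factorial : ℝ)) *
      ((2 * (2 * (m : ℝ)) * (s : ℝ)) / (R - r)) ^ s *
      ∑ t ∈ comps s n, ∏ j, vfNorm (g (t j)) (closedBall q R) := fun S n =>
    Finset.sum_nonneg fun s _ => mul_nonneg (mul_nonneg (by positivity)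
      (pow_nonneg (div_nonneg (by positivity) (sub_nonneg.2 hrR.le)) _))
      (Finset.sum_nonneg fun t _ => Finset.prod_nonneg fun j _ => vfNorm_nonneg _ _)
  refine vfNorm_le (fun z hz => ?_) (add_nonneg (hbound_nonneg _ _) (hbound_nonneg _ _))
  rw [lieB_vVF_eq_of_gaugeRecLHS_eq_zero (hrec i z (hsub (closedBall_subset_closedBall hrR.le hz)))]
  exact (norm_add_le _ _).trans (add_le_add
    (norm_sum_factorial_inv_smul_le hΩ hrR hκ hsub hg (differentiableOn_const _)
      (fun w => (norm_vVF i w).le) _ _ hz)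
    (norm_sum_factorial_inv_smul_le hΩ hrR hκ hsub hg (differentiableOn_const _)
      (fun w => (norm_eVF i w).le) _ _ hz))

/-- Key estimate: if the gauge recursion holds at a fixed order `l ≥ 1`, then
`‖[v_i, ġ_{l+1}]‖_{B_r} ≤ Σ_{s=2}^{l+1} (1/s!)(2Ns/(R−r))^s Σ_{k₁+⋯+k_s=l+1} Π ‖ġ_{k_j}‖_{B_R}
 + Σ_{s=1}^{l} (1/s!)(2Ns/(R−r))^s Σ_{k₁+⋯+k_s=l} Π ‖ġ_{k_j}‖_{B_R}` with `N = 2m`. -/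
theorem stmt_4 (m : ℕ) (hm : 1 ≤ m) (q : JVec m) (r R : ℝ) (hr : 0 < r) (hrR : r < R)
    (Ω : Set (JVec m)) (hΩ : IsOpen Ω) (hsub : polyDisc q R ⊆ Ω)
    (g : ℕ → JVF m) (hg : ∀ k, 1 ≤ k → DifferentiableOn ℂ (g k) Ω)
    (l : ℕ) (hl : 1 ≤ l)
    (hrec : ∀ i : Fin m, ∀ z ∈ Ω, gaugeRecLHS g l i z = 0) :
    ∀ i : Fin m,
      vfNorm (lieB (vVF i) (g (l + 1))) (polyDisc q r)
        ≤ (∑ s ∈ Finset.Icc 2 (l + 1), (1 / (s.factorial : ℝ)) *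
              ((2 * (2 * (m : ℝ)) * (s : ℝ)) / (R - r)) ^ s *
              ∑ t ∈ comps s (l + 1), ∏ j, vfNorm (g (t j)) (polyDisc q R))
          + (∑ s ∈ Finset.Icc 1 l, (1 / (s.factorial : ℝ)) *
              ((2 * (2 * (m : ℝ)) * (s : ℝ)) / (R - r)) ^ s *
              ∑ t ∈ comps s l, ∏ j, vfNorm (g (t j)) (polyDisc q R)) :=
  stmt_4_general m q r R hrR Ω hΩ hsub g hg l hrec
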